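/- arXiv:1107.1219 — 3 statements merged into one kernel-verified Lean document; each statement's English description precedes it below -/
import Mathlib

section
/- For every integer l ≥ 2, every real x with 0 < x ≤ 1/(l+1), and every integer t with 1 ≤ t ≤ l-1, we have (1-x)^l ≤ ((1-(t+1)x)/(1-tx))^(l-t). -/
/-!
Writing `Q t = ((1 - (t+1)x) / (1 - tx))^(l-t)`, we have `Q 0 = (1 - x)^l`, so it suffices
that `t ↦ Q t` is monotone on `t ≤ l - 1`. With `a = 1 - (t+1)x`, `m = l - t - 1` and `u = x / a`,
the inequality `Q t ≤ Q (t+1)` reads `1 ≤ (1+u)^(m+1) (1-u)^m`, which follows from Bernoulli's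
inequality `(1-u²)^m ≥ 1 - m u²` as soon as `m u (1+u) ≤ 1`; and that condition is exactly
`(l+1)x ≤ 1` after clearing denominators.
-/

lemma one_le_one_add_pow_succ_mul_one_sub_pow {u : ℝ} (m : ℕ) (hu0 : 0 ≤ u) (hu1 : u ≤ 1)
    (hm : m * u * (1 + u) ≤ 1) : 1 ≤ (1 + u) ^ (m + 1) * (1 - u) ^ m := by
  have bernoulli : 1 + m * -u ^ 2 ≤ (1 - u ^ 2) ^ m := by
    simpa only [← sub_eq_add_neg] using one_add_mul_le_pow (a := -u ^ 2) (by nlinarith) m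
  calc (1 : ℝ) ≤ (1 + u) * (1 + m * -u ^ 2) := by nlinarith
    _ ≤ (1 + u) * (1 - u ^ 2) ^ m := by gcongr
    _ = (1 + u) ^ (m + 1) * (1 - u) ^ m := by
      rw [show 1 - u ^ 2 = (1 + u) * (1 - u) by ring, mul_pow, pow_succ]
      ring

lemma div_add_pow_succ_le_sub_div_pow {a x : ℝ} (m : ℕ) (ha : 0 < a) (hx0 : 0 ≤ x)
    (hxa : x ≤ a) (hm : m * x * (a + x) ≤ a ^ 2) :
    (a / (a + x)) ^ (m + 1) ≤ ((a - x) / a) ^ m := by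
  have hu1 : x / a ≤ 1 := (div_le_one ha).2 hxa
  have hmu : m * (x / a) * (1 + x / a) ≤ 1 := by
    rw [show m * (x / a) * (1 + x / a) = m * x * (a + x) / a ^ 2 by field_simp]
    exact (div_le_one (by positivity)).2 hm
  have hleft : a / (a + x) = (1 + x / a)⁻¹ := by field_simp
  have hright : (a - x) / a = 1 - x / a := by field_simp
  rw [hleft, hright, inv_pow, inv_le_iff_one_le_mul₀' (by positivity)]
  exact one_le_one_add_pow_succ_mul_one_sub_pow m (by positivity) hu1 hmu

lemma sub_mul_div_sub_mul_pow_le {s x : ℝ} (n : ℕ) (hx : 0 < x) (h : (s + n + 2) * x ≤ 1) :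
    ((1 - (s + 1) * x) / (1 - s * x)) ^ (n + 1) ≤ ((1 - (s + 2) * x) / (1 - (s + 1) * x)) ^ n := by
  have hn : (0 : ℝ) ≤ n := n.cast_nonneg
  have ha : 0 < 1 - (s + 1) * x := by nlinarith
  -- `a² - n x (a + x) = (1 - (s+n+2)x)(1 - sx) + x²` for `a = 1 - (s+1)x`
  have hm : n * x * (1 - (s + 1) * x + x) ≤ (1 - (s + 1) * x) ^ 2 := by
    nlinarith [mul_nonneg (sub_nonneg.2 h) (by linarith : 0 ≤ 1 - s * x)]
  have key := div_add_pow_succ_le_sub_div_pow n ha hx.le (by nlinarith) hm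
  rwa [show 1 - (s + 1) * x + x = 1 - s * x by ring,
    show 1 - (s + 1) * x - x = 1 - (s + 2) * x by ring] at key

noncomputable def samuelsQ (l : ℕ) (x : ℝ) (t : ℕ) : ℝ :=
  ((1 - (t + 1) * x) / (1 - t * x)) ^ (l - t)

lemma samuelsQ_zero (l : ℕ) (x : ℝ) : samuelsQ l x 0 = (1 - x) ^ l := by
  simp [samuelsQ]

lemma monotoneOn_samuelsQ {l : ℕ} {x : ℝ} (hx : 0 < x) (hlx : (l + 1) * x ≤ 1) :
    MonotoneOn (samuelsQ l x) (Set.Iic (l - 1)) := by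
  refine monotoneOn_of_le_add_one Set.ordConnected_Iic fun t _ _ ht ↦ ?_
  obtain ⟨n, rfl⟩ := Nat.exists_eq_add_of_le (by grind : t + 2 ≤ l)
  have hexp : t + 2 + n - t = n + 1 + 1 := by omega
  have hexp' : t + 2 + n - (t + 1) = n + 1 := by omega
  simp only [samuelsQ, hexp, hexp', Nat.cast_add, Nat.cast_one]
  rw [add_assoc (t : ℝ) 1 1, one_add_one_eq_two]
  push_cast at hlx
  exact sub_mul_div_sub_mul_pow_le (n + 1) hx (by push_cast; linarith)

theorem samuels_Q0_minimal_general (l : ℕ) (x : ℝ) (hx0 : 0 < x)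
    (hx1 : x ≤ 1 / (l + 1)) (t : ℕ) (htl : t ≤ l - 1) :
    (1 - x) ^ l ≤ ((1 - (t + 1) * x) / (1 - t * x)) ^ (l - t) := by
  have hlx : (l + 1) * x ≤ 1 := by
    rwa [le_div_iff₀ (by positivity), mul_comm] at hx1
  rw [← samuelsQ_zero]
  exact monotoneOn_samuelsQ hx0 hlx (Nat.zero_le _) htl (Nat.zero_le t)

/-- For every integer `l ≥ 2`, real `x` with `0 < x ≤ 1/(l+1)`, and integer `t` with
`1 ≤ t ≤ l-1`, we have `(1-x)^l ≤ ((1-(t+1)x)/(1-tx))^(l-t)`. -/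
theorem samuels_Q0_minimal (l : ℕ) (hl : 2 ≤ l) (x : ℝ) (hx0 : 0 < x)
    (hx1 : x ≤ 1 / (l + 1)) (t : ℕ) (ht1 : 1 ≤ t) (htl : t ≤ l - 1) :
    (1 - x) ^ l ≤ ((1 - (t + 1) * x) / (1 - t * x)) ^ (l - t) :=
  samuels_Q0_minimal_general l x hx0 hx1 t htl
end

section
/- For integers l ≥ 2, t with 1 ≤ t ≤ l-1, and real x with 0 < x ≤ 1/(l+1), we have ((1-tx)(l-t))/(1-(t+1)x) + t ≤ l/(1-x). -/
/-- For integers `l ≥ 2`, `1 ≤ t ≤ l-1`, and real `0 < x ≤ 1/(l+1)`,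
`((1-tx)(l-t))/(1-(t+1)x) + t ≤ l/(1-x)`. -/
theorem samuels_intermediate_ineq (l t : ℕ) (hl : 2 ≤ l) (ht1 : 1 ≤ t) (htl : t ≤ l - 1)
    (x : ℝ) (hx0 : 0 < x) (hx1 : x ≤ 1 / (l + 1)) :
    ((1 - t * x) * (l - t)) / (1 - (t + 1) * x) + t ≤ l / (1 - x) := by
  have htl' : t + 1 ≤ l := by omega
  have hcast : (t : ℝ) + 1 ≤ l := by exact_mod_cast htl'
  have hl1 : (0:ℝ) < l + 1 := by positivity
  have hxl : ((l:ℝ) + 1) * x ≤ 1 := by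
    nlinarith [(le_div_iff₀ hl1).mp hx1]
  have h1 : 0 < 1 - ((t:ℝ) + 1) * x := by nlinarith
  have h2 : (0:ℝ) < 1 - x := by nlinarith [hcast, ht1]
  have ht0 : (1:ℝ) ≤ t := by exact_mod_cast ht1
  rw [div_add' _ _ _ (ne_of_gt h1), div_le_div_iff₀ h1 h2]
  nlinarith [mul_nonneg (mul_nonneg (by positivity : (0:ℝ) ≤ (t:ℝ)) hx0.le) (by linarith : (0:ℝ) ≤ 1 - ((l:ℝ)+1)*x)]
end

section
/- Let X₁,...,Xₗ be independent random variables where for i ≤ t, Xᵢ is identically equal to μᵢ, and for i ≥ t+1, Xᵢ takes the value 1 - Σ_{j≤t} μⱼ with probability μᵢ/(1 - Σ_{j≤t} μⱼ) and 0 otherwise. Assume 0 ≤ μ₁ ≤ ... ≤ μₗ and Σᵢ μᵢ < 1. Then each Xᵢ has expectation μᵢ and P(X₁ + ... + Xₗ < 1) = Π_{i=t+1}^{l} (1 - μᵢ/(1 - Σ_{j=1}^{t} μⱼ)). -/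
open MeasureTheory ProbabilityTheory Finset

/-!
The first `t` variables are constant and together contribute `S = Σ_{j<t} μⱼ`, and every other
variable takes only the values `0` and `1 - S`. So the sum stays below `1` exactly when all the
two-valued variables vanish, and independence turns the probability of that event into the product
of the probabilities `1 - μᵢ / (1 - S)`.
-/

lemma Finset.sum_filter_add_le_sum {ι : Type*} {s : Finset ι} {f : ι → ℝ} (hf : ∀ i ∈ s, 0 ≤ f i)
    (p : ι → Prop) [DecidablePred p] {i : ι} (hi : i ∈ s) (hpi : ¬ p i) :
    ∑ j ∈ s.filter p, f j + f i ≤ ∑ j ∈ s, f j := by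
  rw [← sum_filter_add_sum_filter_not s p f]
  gcongr
  exact single_le_sum (fun j hj => hf j (mem_filter.1 hj).1) (mem_filter.2 ⟨hi, hpi⟩)

lemma Finset.sum_lt_iff_forall_eq_zero_of_eq_or_eq_zero {ι : Type*} {s : Finset ι} {y : ι → ℝ}
    {c : ℝ} (hc : 0 < c) (hy : ∀ i ∈ s, y i = c ∨ y i = 0) :
    ∑ i ∈ s, y i < c ↔ ∀ i ∈ s, y i = 0 := by
  have hy0 : ∀ i ∈ s, 0 ≤ y i := fun i hi => (hy i hi).elim (fun h => h ▸ hc.le) (fun h => h.ge)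
  refine ⟨fun hlt i hi => (hy i hi).resolve_left fun hyc => ?_, fun h => by
    rwa [sum_eq_zero h]⟩
  exact (hlt.trans_le' (hyc ▸ single_le_sum hy0 hi)).false

section TwoValued

variable {Ω : Type*} {X : Ω → ℝ} {c : ℝ}

lemma eq_indicator_of_forall_eq_or_eq_zero (hX : ∀ ω, X ω = c ∨ X ω = 0) :
    X = {ω | X ω = c}.indicator fun _ => c := by
  funext ω
  by_cases hω : X ω = c
  · simp [hω]
  · exact ((hX ω).resolve_left hω).trans (Set.indicator_of_notMem (s := {ω | X ω = c}) hω _).symm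

lemma integral_eq_measureReal_mul_of_forall_eq_or_eq_zero [MeasurableSpace Ω] (P : Measure Ω)
    (hmeas : Measurable X) (hX : ∀ ω, X ω = c ∨ X ω = 0) :
    ∫ ω, X ω ∂P = P.real {ω | X ω = c} * c := by
  conv_lhs => rw [eq_indicator_of_forall_eq_or_eq_zero hX]
  exact integral_indicator_const (s := {ω | X ω = c}) c (hmeas (measurableSet_singleton c))

end TwoValued

theorem Qt_achieved_general (l t : ℕ)
    (μ : Fin l → ℝ) (hμ0 : ∀ i, 0 ≤ μ i)
    (hμsum : ∑ i, μ i < 1)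
    (Ω : Type*) [MeasurableSpace Ω] (P : Measure Ω) [IsProbabilityMeasure P]
    (X : Fin l → Ω → ℝ) (hmeas : ∀ i, Measurable (X i))
    (hindep : iIndepFun X P)
    (S : ℝ) (hS : S = ∑ i ∈ Finset.univ.filter (fun j : Fin l => (j : ℕ) < t), μ i)
    (hconst : ∀ i : Fin l, (i : ℕ) < t → X i = fun _ => μ i)
    (htwoval : ∀ i : Fin l, t ≤ (i : ℕ) →
      P {ω | X i ω = 1 - S} = ENNReal.ofReal (μ i / (1 - S)) ∧
      P {ω | X i ω = 0} = ENNReal.ofReal (1 - μ i / (1 - S)) ∧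
      ∀ ω, X i ω = 1 - S ∨ X i ω = 0) :
    (∀ i, ∫ ω, X i ω ∂P = μ i) ∧
    P {ω | ∑ i, X i ω < 1} =
      ENNReal.ofReal (∏ i ∈ Finset.univ.filter (fun j : Fin l => t ≤ (j : ℕ)),
        (1 - μ i / (1 - S))) := by
  set T := univ.filter fun j : Fin l => t ≤ (j : ℕ)
  have hS_pos : 0 < 1 - S := by
    have : S ≤ ∑ i, μ i := hS ▸ sum_le_sum_of_subset_of_nonneg (filter_subset _ _)
      fun i _ _ => hμ0 i
    linarith
  have hμ_le : ∀ i : Fin l, t ≤ (i : ℕ) → μ i ≤ 1 - S := fun i hi => by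
    have := sum_filter_add_le_sum (s := univ) (fun j _ => hμ0 j) (fun j : Fin l => (j : ℕ) < t)
      (mem_univ i) (Nat.not_lt.2 hi)
    linarith
  have hsplit : ∀ ω, ∑ i, X i ω = S + ∑ i ∈ T, X i ω := fun ω => by
    rw [← sum_filter_add_sum_filter_not univ (fun j : Fin l => (j : ℕ) < t), hS]
    simp only [T, Nat.not_lt]
    congr 1
    exact sum_congr rfl fun i hi => by rw [hconst i (mem_filter.1 hi).2]
  refine ⟨fun i => ?_, ?_⟩
  · rcases lt_or_ge (i : ℕ) t with hi | hi
    · simp [hconst i hi]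
    · obtain ⟨hP1, -, hX⟩ := htwoval i hi
      rw [integral_eq_measureReal_mul_of_forall_eq_or_eq_zero P (hmeas i) hX, measureReal_def,
        hP1, ENNReal.toReal_ofReal (div_nonneg (hμ0 i) hS_pos.le), div_mul_cancel₀ _ hS_pos.ne']
  · have hevent : {ω | ∑ i, X i ω < 1} = ⋂ i ∈ T, X i ⁻¹' {0} := by
      ext ω
      have h := sum_lt_iff_forall_eq_zero_of_eq_or_eq_zero (s := T) hS_pos
        fun i hi => (htwoval i (mem_filter.1 hi).2).2.2 ω
      simp only [Set.mem_ofPred_eq, Set.mem_iInter, Set.mem_preimage, Set.mem_singleton_iff,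
        hsplit ω, ← h, lt_sub_iff_add_lt']
    rw [hevent, hindep.meas_biInter fun i _ => ⟨{0}, measurableSet_singleton 0, rfl⟩,
      ENNReal.ofReal_prod_of_nonneg fun i hi => ?_]
    · exact prod_congr rfl fun i hi => (htwoval i (mem_filter.1 hi).2).2.1
    · have := (div_le_one hS_pos).2 (hμ_le i (mem_filter.1 hi).2)
      linarith

/-- The explicit collection of independent random variables achieving `Q_t`: for `i ≤ t`,
`Xᵢ ≡ μᵢ`; for `i ≥ t+1`, `Xᵢ` takes value `1 - Σ_{j≤t} μⱼ` with probability
`μᵢ/(1 - Σ_{j≤t} μⱼ)` and `0` otherwise. Then `E[Xᵢ] = μᵢ` and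
`P(Σ Xᵢ < 1) = Π_{i≥t+1} (1 - μᵢ/(1 - Σ_{j≤t} μⱼ))`. -/
theorem Qt_achieved (l t : ℕ) (hl : 1 ≤ l) (ht : t < l)
    (μ : Fin l → ℝ) (hμ0 : ∀ i, 0 ≤ μ i) (hμmono : Monotone μ)
    (hμsum : ∑ i, μ i < 1)
    (Ω : Type*) [MeasurableSpace Ω] (P : Measure Ω) [IsProbabilityMeasure P]
    (X : Fin l → Ω → ℝ) (hmeas : ∀ i, Measurable (X i))
    (hindep : iIndepFun X P)
    (S : ℝ) (hS : S = ∑ i ∈ Finset.univ.filter (fun j : Fin l => (j : ℕ) < t), μ i)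
    (hconst : ∀ i : Fin l, (i : ℕ) < t → X i = fun _ => μ i)
    (htwoval : ∀ i : Fin l, t ≤ (i : ℕ) →
      P {ω | X i ω = 1 - S} = ENNReal.ofReal (μ i / (1 - S)) ∧
      P {ω | X i ω = 0} = ENNReal.ofReal (1 - μ i / (1 - S)) ∧
      ∀ ω, X i ω = 1 - S ∨ X i ω = 0) :
    (∀ i, ∫ ω, X i ω ∂P = μ i) ∧
    P {ω | ∑ i, X i ω < 1} =
      ENNReal.ofReal (∏ i ∈ Finset.univ.filter (fun j : Fin l => t ≤ (j : ℕ)),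
        (1 - μ i / (1 - S))) :=
  Qt_achieved_general l t μ hμ0 hμsum Ω P X hmeas hindep S hS hconst htwoval
end
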